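/- arXiv:2011.03533 — 6 statements merged into one kernel-verified Lean document; each statement's English description precedes it below -/
import Mathlib

section
/- Let n be a positive integer. For every function f : ℝ × (0,∞) → ℝ that is smooth (infinitely differentiable in both variables z and r), the commutation identity [∂_V, Δ̂ₙ] = n r⁻² ∂_V holds, i.e. for all (z,r) with r > 0: ∂_V(Δ̂ₙ f)(z,r) − Δ̂ₙ(∂_V f)(z,r) = n r⁻² (∂_V f)(z,r). -/
open Function Set Filter Topology

/-- Partial derivative in the first variable `z`. -/
noncomputable def pdz (f : ℝ → ℝ → ℝ) (z r : ℝ) : ℝ := deriv (fun z' => f z' r) z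

/-- Partial derivative in the second variable `r`. -/
noncomputable def pdr (f : ℝ → ℝ → ℝ) (z r : ℝ) : ℝ := deriv (fun r' => f z r') r

/-- The operator `Δ̂ₙ f = -∂²f/∂z² - ∂²f/∂r² - (n/r)·∂f/∂r`. -/
noncomputable def hatLap (n : ℕ) (f : ℝ → ℝ → ℝ) (z r : ℝ) : ℝ :=
  - pdz (pdz f) z r - pdr (pdr f) z r - ((n : ℝ) / r) * pdr f z r

/-- The first order operator `∂_V f = r·∂f/∂z - z·∂f/∂r`. -/
noncomputable def dV (f : ℝ → ℝ → ℝ) (z r : ℝ) : ℝ :=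
  r * pdz f z r - z * pdr f z r

namespace CommAux

def S : Set (ℝ × ℝ) := {p : ℝ × ℝ | 0 < p.2}

lemma openS : IsOpen S := isOpen_lt continuous_const continuous_snd

lemma memS {z r : ℝ} (hr : 0 < r) : ((z, r) : ℝ × ℝ) ∈ S := hr

def SM (g : ℝ → ℝ → ℝ) : Prop := ContDiffOn ℝ (⊤ : ℕ∞) (Function.uncurry g) S

variable {g : ℝ → ℝ → ℝ} {z r : ℝ}

lemma SM.diffAt (hg : SM g) (hr : 0 < r) :
    DifferentiableAt ℝ (Function.uncurry g) (z, r) :=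
  (hg.contDiffAt (openS.mem_nhds (memS hr))).differentiableAt (by simp)

lemma hasDerivAt_slice_z {G : ℝ × ℝ → ℝ} (hG : DifferentiableAt ℝ G (z, r)) :
    HasDerivAt (fun z' => G (z', r)) (fderiv ℝ G (z, r) (1, 0)) z := by
  have h1 : HasDerivAt (fun z' : ℝ => ((z', r) : ℝ × ℝ)) ((1, 0) : ℝ × ℝ) z :=
    HasDerivAt.prodMk (hasDerivAt_id z) (hasDerivAt_const z r)
  exact hG.hasFDerivAt.comp_hasDerivAt z h1

lemma hasDerivAt_slice_r {G : ℝ × ℝ → ℝ} (hG : DifferentiableAt ℝ G (z, r)) :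
    HasDerivAt (fun r' => G (z, r')) (fderiv ℝ G (z, r) (0, 1)) r := by
  have h1 : HasDerivAt (fun r' : ℝ => ((z, r') : ℝ × ℝ)) ((0, 1) : ℝ × ℝ) r :=
    HasDerivAt.prodMk (hasDerivAt_const r z) (hasDerivAt_id r)
  exact hG.hasFDerivAt.comp_hasDerivAt r h1

lemma pdz_eq (hg : SM g) (hr : 0 < r) :
    pdz g z r = fderiv ℝ (Function.uncurry g) (z, r) (1, 0) :=
  (hasDerivAt_slice_z (hg.diffAt hr)).deriv

lemma pdr_eq (hg : SM g) (hr : 0 < r) :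
    pdr g z r = fderiv ℝ (Function.uncurry g) (z, r) (0, 1) :=
  (hasDerivAt_slice_r (hg.diffAt hr)).deriv

end CommAux

namespace CommAux

variable {g : ℝ → ℝ → ℝ} {z r : ℝ}

lemma SM.pdzSM (hg : SM g) : SM (pdz g) := by
  have h : ContDiffOn ℝ (⊤ : ℕ∞) (fun p : ℝ × ℝ => fderiv ℝ (Function.uncurry g) p ((1 : ℝ), (0 : ℝ))) S :=
    (hg.fderiv_of_isOpen openS (by simp)).clm_apply contDiffOn_const
  exact h.congr fun p hp => pdz_eq hg hp

lemma SM.pdrSM (hg : SM g) : SM (pdr g) := by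
  have h : ContDiffOn ℝ (⊤ : ℕ∞) (fun p : ℝ × ℝ => fderiv ℝ (Function.uncurry g) p ((0 : ℝ), (1 : ℝ))) S :=
    (hg.fderiv_of_isOpen openS (by simp)).clm_apply contDiffOn_const
  exact h.congr fun p hp => pdr_eq hg hp

lemma SM.hasDerivAt_z (hg : SM g) (hr : 0 < r) :
    HasDerivAt (fun z' => g z' r) (pdz g z r) z := by
  rw [pdz_eq hg hr]; exact hasDerivAt_slice_z (hg.diffAt hr)

lemma SM.hasDerivAt_r (hg : SM g) (hr : 0 < r) :
    HasDerivAt (fun r' => g z r') (pdr g z r) r := by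
  rw [pdr_eq hg hr]; exact hasDerivAt_slice_r (hg.diffAt hr)

lemma SM.diff_fderiv (hg : SM g) (hr : 0 < r) :
    DifferentiableAt ℝ (fderiv ℝ (Function.uncurry g)) (z, r) :=
  ((hg.contDiffAt (openS.mem_nhds (memS hr))).fderiv_right
    (m := 1) (by exact WithTop.coe_le_coe.mpr le_top)).differentiableAt one_ne_zero

lemma pdz_pdr_eq (hg : SM g) (hr : 0 < r) :
    pdz (pdr g) z r
      = fderiv ℝ (fderiv ℝ (Function.uncurry g)) (z, r) (1, 0) (0, 1) := by
  have hfun : (fun z' => pdr g z' r)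
      = fun z' => (ContinuousLinearMap.apply ℝ ℝ ((0 : ℝ), (1 : ℝ)))
          (fderiv ℝ (Function.uncurry g) (z', r)) :=
    funext fun z' => pdr_eq hg hr
  have hG : DifferentiableAt ℝ
      (fun p : ℝ × ℝ => (ContinuousLinearMap.apply ℝ ℝ ((0 : ℝ), (1 : ℝ)))
        (fderiv ℝ (Function.uncurry g) p)) (z, r) :=
    (ContinuousLinearMap.apply ℝ ℝ ((0 : ℝ), (1 : ℝ))).differentiable.differentiableAt.comp
      _ (hg.diff_fderiv hr)
  have h := hasDerivAt_slice_z hG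
  rw [pdz, hfun, h.deriv]
  have := ((ContinuousLinearMap.apply ℝ ℝ ((0 : ℝ), (1 : ℝ)))).hasFDerivAt.comp
      ((z, r) : ℝ × ℝ) (hg.diff_fderiv hr).hasFDerivAt
  have e : (fun p : ℝ × ℝ => (ContinuousLinearMap.apply ℝ ℝ ((0 : ℝ), (1 : ℝ)))
      (fderiv ℝ (Function.uncurry g) p))
      = ⇑(ContinuousLinearMap.apply ℝ ℝ ((0 : ℝ), (1 : ℝ))) ∘ fderiv ℝ (Function.uncurry g) := rfl
  rw [e, this.fderiv]
  rfl

lemma pdr_pdz_eq (hg : SM g) (hr : 0 < r) :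
    pdr (pdz g) z r
      = fderiv ℝ (fderiv ℝ (Function.uncurry g)) (z, r) (0, 1) (1, 0) := by
  have hfun : (fun r' => pdz g z r') =ᶠ[𝓝 r]
      fun r' => (ContinuousLinearMap.apply ℝ ℝ ((1 : ℝ), (0 : ℝ)))
          (fderiv ℝ (Function.uncurry g) (z, r')) := by
    filter_upwards [eventually_gt_nhds hr] with r' hr' using pdz_eq hg hr'
  have hG : DifferentiableAt ℝ
      (fun p : ℝ × ℝ => (ContinuousLinearMap.apply ℝ ℝ ((1 : ℝ), (0 : ℝ)))
        (fderiv ℝ (Function.uncurry g) p)) (z, r) :=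
    (ContinuousLinearMap.apply ℝ ℝ ((1 : ℝ), (0 : ℝ))).differentiable.differentiableAt.comp
      _ (hg.diff_fderiv hr)
  have h := hasDerivAt_slice_r hG
  rw [pdr, hfun.deriv_eq, h.deriv]
  have := ((ContinuousLinearMap.apply ℝ ℝ ((1 : ℝ), (0 : ℝ)))).hasFDerivAt.comp
      ((z, r) : ℝ × ℝ) (hg.diff_fderiv hr).hasFDerivAt
  have e : (fun p : ℝ × ℝ => (ContinuousLinearMap.apply ℝ ℝ ((1 : ℝ), (0 : ℝ)))
      (fderiv ℝ (Function.uncurry g) p))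
      = ⇑(ContinuousLinearMap.apply ℝ ℝ ((1 : ℝ), (0 : ℝ))) ∘ fderiv ℝ (Function.uncurry g) := rfl
  rw [e, this.fderiv]
  rfl

lemma clairaut (hg : SM g) (hr : 0 < r) :
    pdz (pdr g) z r = pdr (pdz g) z r := by
  rw [pdz_pdr_eq hg hr, pdr_pdz_eq hg hr]
  exact ((hg.contDiffAt (openS.mem_nhds (memS hr))).isSymmSndFDerivAt (by rw [minSmoothness_of_isRCLikeNormedField]; exact WithTop.coe_le_coe.mpr le_top)) _ _

end CommAux

namespace CommAux

variable {f : ℝ → ℝ → ℝ} {z r : ℝ} {n : ℕ}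

lemma pdz_hatLap (hf : SM f) (hr : 0 < r) :
    pdz (hatLap n f) z r =
      -pdz (pdz (pdz f)) z r - pdz (pdr (pdr f)) z r - ((n : ℝ) / r) * pdz (pdr f) z r := by
  have H := ((hf.pdzSM.pdzSM.hasDerivAt_z (z := z) hr).neg.sub
      (hf.pdrSM.pdrSM.hasDerivAt_z (z := z) hr)).sub
      ((hf.pdrSM.hasDerivAt_z (z := z) hr).const_mul ((n : ℝ) / r))
  rw [pdz]
  exact H.deriv

lemma pdr_hatLap (hf : SM f) (hr : 0 < r) :
    pdr (hatLap n f) z r =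
      -pdr (pdz (pdz f)) z r - pdr (pdr (pdr f)) z r -
        ((n : ℝ) * -(r ^ 2)⁻¹ * pdr f z r + (n : ℝ) * r⁻¹ * pdr (pdr f) z r) := by
  have hinv : HasDerivAt (fun r' : ℝ => (n : ℝ) * r'⁻¹) ((n : ℝ) * -(r ^ 2)⁻¹) r :=
    (hasDerivAt_inv hr.ne').const_mul _
  have H := ((hf.pdzSM.pdzSM.hasDerivAt_r (z := z) hr).neg.sub
      (hf.pdrSM.pdrSM.hasDerivAt_r (z := z) hr)).sub (hinv.mul (hf.pdrSM.hasDerivAt_r (z := z) hr))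
  have hfun : (fun r' => hatLap n f z r')
      = fun r' => -pdz (pdz f) z r' - pdr (pdr f) z r' - ((n : ℝ) * r'⁻¹) * pdr f z r' := by
    funext r'; simp [hatLap, div_eq_mul_inv]
  rw [pdr, hfun]
  exact H.deriv

lemma pdz_dV (hf : SM f) (hr : 0 < r) :
    pdz (dV f) z r = r * pdz (pdz f) z r - (pdr f z r + z * pdz (pdr f) z r) := by
  have H := ((hf.pdzSM.hasDerivAt_z (z := z) hr).const_mul r).sub
      ((hasDerivAt_id z).mul (hf.pdrSM.hasDerivAt_z (z := z) hr))
  rw [pdz]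
  simp only [dV]
  convert H.deriv using 1
  · rfl
  · simp

lemma pdr_dV (hf : SM f) (hr : 0 < r) :
    pdr (dV f) z r = (pdz f z r + r * pdr (pdz f) z r) - z * pdr (pdr f) z r := by
  have H := ((hasDerivAt_id r).mul (hf.pdzSM.hasDerivAt_r (z := z) hr)).sub
      ((hf.pdrSM.hasDerivAt_r (z := z) hr).const_mul z)
  rw [pdr]
  simp only [dV]
  convert H.deriv using 1
  · rfl
  · simp

lemma pdzz_dV (hf : SM f) (hr : 0 < r) :
    pdz (pdz (dV f)) z r =
      r * pdz (pdz (pdz f)) z r -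
        (pdz (pdr f) z r + (pdz (pdr f) z r + z * pdz (pdz (pdr f)) z r)) := by
  have hfun : (fun z' => pdz (dV f) z' r)
      = fun z' => r * pdz (pdz f) z' r - (pdr f z' r + z' * pdz (pdr f) z' r) :=
    funext fun z' => pdz_dV hf hr
  have H := ((hf.pdzSM.pdzSM.hasDerivAt_z (z := z) hr).const_mul r).sub
      ((hf.pdrSM.hasDerivAt_z (z := z) hr).add
        ((hasDerivAt_id z).mul (hf.pdrSM.pdzSM.hasDerivAt_z (z := z) hr)))
  rw [pdz, hfun]
  convert H.deriv using 1
  · rfl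
  · simp

lemma pdrr_dV (hf : SM f) (hr : 0 < r) :
    pdr (pdr (dV f)) z r =
      (pdr (pdz f) z r + (pdr (pdz f) z r + r * pdr (pdr (pdz f)) z r)) -
        z * pdr (pdr (pdr f)) z r := by
  have hfun : (fun r' => pdr (dV f) z r') =ᶠ[𝓝 r]
      fun r' => (pdz f z r' + r' * pdr (pdz f) z r') - z * pdr (pdr f) z r' := by
    filter_upwards [eventually_gt_nhds hr] with r' hr' using pdr_dV hf hr'
  have H := ((hf.pdzSM.hasDerivAt_r (z := z) hr).add
      ((hasDerivAt_id r).mul (hf.pdzSM.pdrSM.hasDerivAt_r (z := z) hr))).sub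
      ((hf.pdrSM.pdrSM.hasDerivAt_r (z := z) hr).const_mul z)
  rw [pdr, hfun.deriv_eq]
  convert H.deriv using 1
  · rfl
  · simp

lemma mix1 (hf : SM f) (hr : 0 < r) :
    pdr (pdz (pdz f)) z r = pdz (pdz (pdr f)) z r := by
  have h1 : pdr (pdz (pdz f)) z r = pdz (pdr (pdz f)) z r := (clairaut hf.pdzSM hr).symm
  have h2 : pdz (pdr (pdz f)) z r = pdz (pdz (pdr f)) z r := by
    rw [pdz, pdz]
    congr 1
    funext z'
    exact (clairaut hf (z := z') hr).symm
  rw [h1, h2]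

lemma mix2 (hf : SM f) (hr : 0 < r) :
    pdz (pdr (pdr f)) z r = pdr (pdr (pdz f)) z r := by
  have h1 : pdz (pdr (pdr f)) z r = pdr (pdz (pdr f)) z r := clairaut hf.pdrSM hr
  have h2 : pdr (pdz (pdr f)) z r = pdr (pdr (pdz f)) z r := by
    rw [pdr, pdr]
    apply Filter.EventuallyEq.deriv_eq
    filter_upwards [eventually_gt_nhds hr] with r' hr' using clairaut hf hr'
  rw [h1, h2]

end CommAux

/-- The commutation identity `[∂_V, Δ̂ₙ] = n r⁻² ∂_V`. -/
theorem commutator_dV_hatLap (n : ℕ) (hn : 0 < n) (f : ℝ → ℝ → ℝ)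
    (hf : ContDiffOn ℝ (⊤ : ℕ∞) (Function.uncurry f) {p : ℝ × ℝ | 0 < p.2}) :
    ∀ z r : ℝ, 0 < r →
      dV (hatLap n f) z r - hatLap n (dV f) z r = (n : ℝ) / r ^ 2 * dV f z r := by
  intro z r hr
  have hf' : CommAux.SM f := hf
  have e1 : dV (hatLap n f) z r
      = r * pdz (hatLap n f) z r - z * pdr (hatLap n f) z r := rfl
  have e2 : hatLap n (dV f) z r
      = -pdz (pdz (dV f)) z r - pdr (pdr (dV f)) z r - ((n : ℝ) / r) * pdr (dV f) z r := rfl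
  have e3 : dV f z r = r * pdz f z r - z * pdr f z r := rfl
  rw [e1, e2, e3, CommAux.pdz_hatLap hf' hr, CommAux.pdr_hatLap hf' hr,
    CommAux.pdzz_dV hf' hr, CommAux.pdrr_dV hf' hr, CommAux.pdr_dV hf' hr,
    CommAux.mix2 hf' hr, CommAux.mix1 hf' hr,
    show pdr (pdz f) z r = pdz (pdr f) z r from (CommAux.clairaut hf' hr).symm]
  field_simp
  ring
end

section
/- Let n be a positive integer, let f : ℝ × (0,∞) → ℝ be smooth, and define g(z,r) = −(z/r)·f(z,r). Then on all of ℝ × (0,∞): Δ̂ₙ g = −(z/r)·Δ̂ₙ f + (n−2) r⁻² g + 2 r⁻² ∂_V f, and moreover r·∂f/∂z + r·∂g/∂r = ∂_V f − g. -/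
/-- For smooth `f` and `g = -(z/r)·f`, we have
`Δ̂ₙ g = -(z/r)·Δ̂ₙ f + (n-2) r⁻² g + 2 r⁻² ∂_V f` and
`r·∂_z f + r·∂_r g = ∂_V f - g` on `ℝ × (0,∞)`. -/
theorem hatLap_of_neg_zr_mul (n : ℕ) (hn : 0 < n) (f : ℝ → ℝ → ℝ)
    (hf : ContDiffOn ℝ (⊤ : ℕ∞) (Function.uncurry f) {p : ℝ × ℝ | 0 < p.2})
    (g : ℝ → ℝ → ℝ) (hg : ∀ z r : ℝ, 0 < r → g z r = -(z / r) * f z r) :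
    ∀ z r : ℝ, 0 < r →
      (hatLap n g z r = -(z / r) * hatLap n f z r + ((n : ℝ) - 2) / r ^ 2 * g z r
          + 2 / r ^ 2 * dV f z r)
      ∧ r * pdz f z r + r * pdr g z r = dV f z r - g z r := by
  set s : Set (ℝ × ℝ) := {p : ℝ × ℝ | 0 < p.2} with hs
  have hso : IsOpen s := isOpen_lt continuous_const continuous_snd
  have hfd' : ∀ p ∈ s, DifferentiableAt ℝ (Function.uncurry f) p := fun p hp =>
    ((hf.differentiableOn (by simp)) p hp).differentiableAt (hso.mem_nhds hp)
  -- slice differentiability & first partials as joint fderiv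
  have hcurve1 : ∀ z' r' : ℝ, HasDerivAt (fun t : ℝ => (t, r')) ((1:ℝ), (0:ℝ)) z' := by
    intro z' r'
    exact (hasDerivAt_id z').prodMk (hasDerivAt_const z' r')
  have hcurve2 : ∀ z' r' : ℝ, HasDerivAt (fun t : ℝ => (z', t)) ((0:ℝ), (1:ℝ)) r' := by
    intro z' r'
    exact (hasDerivAt_const r' z').prodMk (hasDerivAt_id r')
  have hfz : ∀ z' r' : ℝ, 0 < r' →
      HasDerivAt (fun t => f t r') (fderiv ℝ (Function.uncurry f) (z', r') (1, 0)) z' := by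
    intro z' r' hr'
    exact ((hfd' (z', r') hr').hasFDerivAt).comp_hasDerivAt z' (hcurve1 z' r')
  have hfr : ∀ z' r' : ℝ, 0 < r' →
      HasDerivAt (fun t => f z' t) (fderiv ℝ (Function.uncurry f) (z', r') (0, 1)) r' := by
    intro z' r' hr'
    exact ((hfd' (z', r') hr').hasFDerivAt).comp_hasDerivAt r' (hcurve2 z' r')
  have hpdz : ∀ z' r' : ℝ, 0 < r' →
      pdz f z' r' = fderiv ℝ (Function.uncurry f) (z', r') (1, 0) := fun z' r' hr' =>
    (hfz z' r' hr').deriv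
  have hpdr : ∀ z' r' : ℝ, 0 < r' →
      pdr f z' r' = fderiv ℝ (Function.uncurry f) (z', r') (0, 1) := fun z' r' hr' =>
    (hfr z' r' hr').deriv
  -- differentiability of the fderiv
  have hDf : DifferentiableOn ℝ (fderiv ℝ (Function.uncurry f)) s :=
    (hf.fderiv_of_isOpen hso (m := 1) (WithTop.coe_le_coe.mpr le_top)).differentiableOn one_ne_zero
  intro z r hr
  have hmem : ((z, r) : ℝ × ℝ) ∈ s := hr
  -- first derivatives at the point, restated
  have hfz0 : HasDerivAt (fun t => f t r) (pdz f z r) z := by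
    rw [hpdz z r hr]; exact hfz z r hr
  have hfr0 : HasDerivAt (fun t => f z t) (pdr f z r) r := by
    rw [hpdr z r hr]; exact hfr z r hr
  -- second derivatives exist
  have hA : HasDerivAt (fun t => pdz f t r) (pdz (pdz f) z r) z := by
    have heq : (fun t => pdz f t r)
        = fun t => (ContinuousLinearMap.apply ℝ ℝ ((1:ℝ), (0:ℝ)))
            (fderiv ℝ (Function.uncurry f) (t, r)) := by
      funext t; exact hpdz t r hr
    have hd : DifferentiableAt ℝ (fun t => pdz f t r) z := by
      rw [heq]
      exact ((ContinuousLinearMap.apply ℝ ℝ ((1:ℝ), (0:ℝ))).differentiableAt.comp _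
        ((hDf.differentiableAt (hso.mem_nhds hmem)).comp z
          ((differentiableAt_id).prodMk (differentiableAt_const r))))
    exact hd.hasDerivAt
  have hB : HasDerivAt (fun t => pdr f z t) (pdr (pdr f) z r) r := by
    have heq : (fun t => pdr f z t)
        =ᶠ[nhds r] fun t => (ContinuousLinearMap.apply ℝ ℝ ((0:ℝ), (1:ℝ)))
            (fderiv ℝ (Function.uncurry f) (z, t)) := by
      filter_upwards [eventually_gt_nhds hr] with t ht using hpdr z t ht
    have hd : DifferentiableAt ℝ (fun t => pdr f z t) r := by
      rw [heq.differentiableAt_iff]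
      exact ((ContinuousLinearMap.apply ℝ ℝ ((0:ℝ), (1:ℝ))).differentiableAt.comp _
        ((hDf.differentiableAt (hso.mem_nhds hmem)).comp r
          ((differentiableAt_const z).prodMk differentiableAt_id)))
    exact hd.hasDerivAt
  -- first z-derivative of g (for all z', fixed r)
  have Hgz : ∀ z' : ℝ, pdz g z' r = -(1/r) * f z' r - (z'/r) * pdz f z' r := by
    intro z'
    have hfz' : HasDerivAt (fun t => f t r) (pdz f z' r) z' := by
      rw [hpdz z' r hr]; exact hfz z' r hr
    have h2 : (fun t => g t r) = fun t => -(t/r) * f t r := funext fun t => hg t r hr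
    have h1 : HasDerivAt (fun t => -(t/r) * f t r)
        (-(1/r) * f z' r + -(z'/r) * pdz f z' r) z' :=
      HasDerivAt.mul (((hasDerivAt_id z').div_const r).neg) hfz'
    have : pdz g z' r = -(1/r) * f z' r + -(z'/r) * pdz f z' r := by
      rw [pdz, h2]; exact h1.deriv
    rw [this]; ring
  -- first r-derivative of g (fixed z, for all r' > 0)
  have Hgr : ∀ r' : ℝ, 0 < r' →
      pdr g z r' = z / r' ^ 2 * f z r' - z / r' * pdr f z r' := by
    intro r' hr'
    have hfr' : HasDerivAt (fun t => f z t) (pdr f z r') r' := by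
      rw [hpdr z r' hr']; exact hfr z r' hr'
    have heq : (fun t => g z t) =ᶠ[nhds r'] fun t => -(z/t) * f z t := by
      filter_upwards [eventually_gt_nhds hr'] with t ht using hg z t ht
    have hq : HasDerivAt (fun t : ℝ => -(z/t)) (z / r' ^ 2) r' := by
      have h := ((hasDerivAt_inv hr'.ne').const_mul z).neg
      simp only [div_eq_mul_inv]
      refine h.congr_deriv ?_
      field_simp
    have h1 : HasDerivAt (fun t => -(z/t) * f z t)
        (z / r' ^ 2 * f z r' + -(z/r') * pdr f z r') r' := hq.mul hfr'
    have h2 := h1.congr_of_eventuallyEq heq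
    rw [pdr, h2.deriv]; ring
  -- second z-derivative of g
  have Hgzz : pdz (pdz g) z r
      = -(1/r) * pdz f z r - (1/r * pdz f z r + z/r * pdz (pdz f) z r) := by
    have h2 : (fun t => pdz g t r) = fun t => -(1/r) * f t r - (t/r) * pdz f t r :=
      funext fun t => Hgz t
    have h1 : HasDerivAt (fun t => -(1/r) * f t r - (t/r) * pdz f t r)
        (-(1/r) * pdz f z r - (1/r * pdz f z r + z/r * pdz (pdz f) z r)) z :=
      (hfz0.const_mul (-(1/r))).sub (HasDerivAt.mul ((hasDerivAt_id z).div_const r) hA)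
    rw [pdz, h2, h1.deriv]
  -- second r-derivative of g
  have Hgrr : pdr (pdr g) z r
      = ((-2 * z / r ^ 3) * f z r + z / r ^ 2 * pdr f z r)
        - ((-(z / r ^ 2)) * pdr f z r + z / r * pdr (pdr f) z r) := by
    have heq : (fun t => pdr g z t)
        =ᶠ[nhds r] fun t => z / t ^ 2 * f z t - z / t * pdr f z t := by
      filter_upwards [eventually_gt_nhds hr] with t ht using Hgr t ht
    have hq1 : HasDerivAt (fun t : ℝ => z / t ^ 2) (-2 * z / r ^ 3) r := by
      have h := (((hasDerivAt_pow 2 r).inv (by positivity)).const_mul z)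
      simp only [div_eq_mul_inv]
      refine h.congr_deriv ?_
      field_simp
      ring
    have hq2 : HasDerivAt (fun t : ℝ => z / t) (-(z / r ^ 2)) r := by
      have h := ((hasDerivAt_inv hr.ne').const_mul z)
      simp only [div_eq_mul_inv]
      refine h.congr_deriv ?_
      field_simp
    have h1 : HasDerivAt (fun t => z / t ^ 2 * f z t - z / t * pdr f z t)
        (((-2 * z / r ^ 3) * f z r + z / r ^ 2 * pdr f z r)
          - ((-(z / r ^ 2)) * pdr f z r + z / r * pdr (pdr f) z r)) r :=
      (hq1.mul hfr0).sub (hq2.mul hB)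
    have h2 := h1.congr_of_eventuallyEq heq
    rw [pdr, h2.deriv]
  constructor
  · rw [hatLap, hatLap, Hgzz, Hgrr, Hgr r hr, dV, hg z r hr]
    field_simp
    ring
  · rw [Hgr r hr, dV, hg z r hr]
    field_simp
    ring
end

section
/- Let n be a positive integer and λ > 0 a real number. Let P : ℝ × (0,∞) → ℝ be a smooth solution of Δ̂ₙ P + λ r⁻² P = 0, and define Q = −(z/r)·P and let R be smooth satisfying λ·R = r·∂P/∂z + r·∂Q/∂r + n·Q. Then on ℝ × (0,∞): Δ̂ₙ Q + r⁻²(λ+n) Q − 2 λ r⁻² R = 0 and Δ̂ₙ R + r⁻²(λ+2−n) R − 2 r⁻² Q = 0. -/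
open Filter Topology ContDiff

def Uset : Set (ℝ × ℝ) := {p : ℝ × ℝ | 0 < p.2}

lemma isOpen_Uset : IsOpen Uset := isOpen_lt continuous_const continuous_snd

variable {g : ℝ → ℝ → ℝ}

lemma uset_mem {z r : ℝ} (hr : 0 < r) : ((z, r) : ℝ × ℝ) ∈ Uset := hr

lemma pd_hasFDerivAt (hg : ContDiffOn ℝ ∞ (Function.uncurry g) Uset) {p : ℝ × ℝ}
    (hp : p ∈ Uset) :
    HasFDerivAt (Function.uncurry g) (fderiv ℝ (Function.uncurry g) p) p :=
  ((hg.contDiffAt (isOpen_Uset.mem_nhds hp)).differentiableAt (by simp)).hasFDerivAt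

lemma hdz' (hg : ContDiffOn ℝ ∞ (Function.uncurry g) Uset) (z : ℝ) {r : ℝ} (hr : 0 < r) :
    HasDerivAt (fun z' => g z' r)
      (fderiv ℝ (Function.uncurry g) (z, r) (1, 0)) z :=
  by
  have := (pd_hasFDerivAt (g := g) hg (uset_mem (z := z) hr)).comp_hasDerivAt z
    (HasDerivAt.prodMk (hasDerivAt_id' (x := z)) (hasDerivAt_const z r))
  exact this

lemma hdr' (hg : ContDiffOn ℝ ∞ (Function.uncurry g) Uset) (z : ℝ) {r : ℝ} (hr : 0 < r) :
    HasDerivAt (fun r' => g z r')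
      (fderiv ℝ (Function.uncurry g) (z, r) (0, 1)) r :=
  (pd_hasFDerivAt hg (uset_mem hr)).comp_hasDerivAt r
    (HasDerivAt.prodMk (hasDerivAt_const r z) (hasDerivAt_id' (x := r)))

lemma pdz_eq (hg : ContDiffOn ℝ ∞ (Function.uncurry g) Uset) (z : ℝ) {r : ℝ} (hr : 0 < r) :
    pdz g z r = fderiv ℝ (Function.uncurry g) (z, r) (1, 0) := (hdz' hg z hr).deriv

lemma pdr_eq (hg : ContDiffOn ℝ ∞ (Function.uncurry g) Uset) (z : ℝ) {r : ℝ} (hr : 0 < r) :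
    pdr g z r = fderiv ℝ (Function.uncurry g) (z, r) (0, 1) := (hdr' hg z hr).deriv

lemma hdz (hg : ContDiffOn ℝ ∞ (Function.uncurry g) Uset) (z : ℝ) {r : ℝ} (hr : 0 < r) :
    HasDerivAt (fun z' => g z' r) (pdz g z r) z := by
  rw [pdz_eq hg z hr]; exact hdz' hg z hr

lemma hdr (hg : ContDiffOn ℝ ∞ (Function.uncurry g) Uset) (z : ℝ) {r : ℝ} (hr : 0 < r) :
    HasDerivAt (fun r' => g z r') (pdr g z r) r := by
  rw [pdr_eq hg z hr]; exact hdr' hg z hr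

lemma smooth_fderiv (hg : ContDiffOn ℝ ∞ (Function.uncurry g) Uset) :
    ContDiffOn ℝ ∞ (fderiv ℝ (Function.uncurry g)) Uset :=
  ((contDiffOn_infty_iff_fderiv_of_isOpen isOpen_Uset).1 hg).2

lemma smooth_pdz (hg : ContDiffOn ℝ ∞ (Function.uncurry g) Uset) :
    ContDiffOn ℝ ∞ (Function.uncurry (pdz g)) Uset := by
  have h2 : ContDiffOn ℝ ∞ (fun p => fderiv ℝ (Function.uncurry g) p ((1 : ℝ), (0 : ℝ))) Uset :=
    (smooth_fderiv hg).clm_apply contDiffOn_const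
  exact h2.congr fun p hp => by
    have h : (0:ℝ) < p.2 := hp
    show pdz g p.1 p.2 = _
    rw [pdz_eq hg p.1 h]

lemma smooth_pdr (hg : ContDiffOn ℝ ∞ (Function.uncurry g) Uset) :
    ContDiffOn ℝ ∞ (Function.uncurry (pdr g)) Uset := by
  have h2 : ContDiffOn ℝ ∞ (fun p => fderiv ℝ (Function.uncurry g) p ((0 : ℝ), (1 : ℝ))) Uset :=
    (smooth_fderiv hg).clm_apply contDiffOn_const
  exact h2.congr fun p hp => by
    have h : (0:ℝ) < p.2 := hp
    show pdr g p.1 p.2 = _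
    rw [pdr_eq hg p.1 h]

lemma pdz_of_hasDerivAt {f : ℝ → ℝ → ℝ} {z r v : ℝ} {e : ℝ → ℝ}
    (hv : HasDerivAt e v z) (he : ∀ z', f z' r = e z') : pdz f z r = v := by
  unfold pdz
  rw [show (fun z' => f z' r) = e from funext he]
  exact hv.deriv

lemma pdr_of_hasDerivAt {f : ℝ → ℝ → ℝ} {z r v : ℝ} {e : ℝ → ℝ} (hr : 0 < r)
    (hv : HasDerivAt e v r) (he : ∀ r', 0 < r' → f z r' = e r') : pdr f z r = v := by
  have hev : (fun r' => f z r') =ᶠ[𝓝 r] e := (eventually_gt_nhds hr).mono he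
  unfold pdr
  rw [hev.deriv_eq]
  exact hv.deriv

lemma pdz_congr {f h : ℝ → ℝ → ℝ} {z r : ℝ} (he : ∀ z', f z' r = h z' r) :
    pdz f z r = pdz h z r := by
  unfold pdz; rw [funext he]

lemma pdr_congr {f h : ℝ → ℝ → ℝ} {z r : ℝ} (hr : 0 < r)
    (he : ∀ r', 0 < r' → f z r' = h z r') : pdr f z r = pdr h z r := by
  have hev : (fun r' => f z r') =ᶠ[𝓝 r] (fun r' => h z r') := (eventually_gt_nhds hr).mono he
  unfold pdr; exact hev.deriv_eq

lemma pd_comm (hg : ContDiffOn ℝ ∞ (Function.uncurry g) Uset) {z r : ℝ} (hr : 0 < r) :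
    pdz (pdr g) z r = pdr (pdz g) z r := by
  set F := Function.uncurry g with hF
  have hmem : Uset ∈ 𝓝 ((z, r) : ℝ × ℝ) := isOpen_Uset.mem_nhds (uset_mem hr)
  have hev : ∀ᶠ y in 𝓝 ((z, r) : ℝ × ℝ), HasFDerivAt F (fderiv ℝ F y) y := by
    filter_upwards [hmem] with y hy using pd_hasFDerivAt hg hy
  have hf'' : HasFDerivAt (fderiv ℝ F) (fderiv ℝ (fderiv ℝ F) (z, r)) (z, r) :=
    (((smooth_fderiv hg).contDiffAt hmem).differentiableAt (by simp)).hasFDerivAt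
  have hsym := second_derivative_symmetric_of_eventually hev hf''
    ((1 : ℝ), (0 : ℝ)) ((0 : ℝ), (1 : ℝ))
  have hz1 : HasDerivAt (fun z' => fderiv ℝ F (z', r))
      (fderiv ℝ (fderiv ℝ F) (z, r) (1, 0)) z :=
    hf''.comp_hasDerivAt z (HasDerivAt.prodMk (hasDerivAt_id' (x := z)) (hasDerivAt_const z r))
  have hr1 : HasDerivAt (fun r' => fderiv ℝ F (z, r'))
      (fderiv ℝ (fderiv ℝ F) (z, r) (0, 1)) r :=
    hf''.comp_hasDerivAt r (HasDerivAt.prodMk (hasDerivAt_const r z) (hasDerivAt_id' (x := r)))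
  have h1 : pdz (pdr g) z r = fderiv ℝ (fderiv ℝ F) (z, r) (1, 0) (0, 1) := by
    have hv := hz1.clm_apply (hasDerivAt_const z ((0 : ℝ), (1 : ℝ)))
    have := pdz_of_hasDerivAt hv (fun z' => pdr_eq hg z' hr)
    simpa using this
  have h2 : pdr (pdz g) z r = fderiv ℝ (fderiv ℝ F) (z, r) (0, 1) (1, 0) := by
    have hv := hr1.clm_apply (hasDerivAt_const r ((1 : ℝ), (0 : ℝ)))
    have := pdr_of_hasDerivAt hr hv (fun r' hr' => pdz_eq hg z hr')
    simpa using this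
  rw [h1, h2, hsym]


set_option maxHeartbeats 2000000 in
/-- Lemma B.1 of the paper: if `Δ̂ₙ P + λ r⁻² P = 0`, `Q = -(z/r)P` and
`λ R = r ∂_z P + r ∂_r Q + n Q`, then
`Δ̂ₙ Q + r⁻²(λ+n) Q - 2λ r⁻² R = 0` and `Δ̂ₙ R + r⁻²(λ+2-n) R - 2 r⁻² Q = 0`. -/
theorem system_one_forms (n : ℕ) (hn : 0 < n) (lam : ℝ) (hlam : 0 < lam)
    (P R : ℝ → ℝ → ℝ)
    (hPsmooth : ContDiffOn ℝ (⊤ : ℕ∞) (Function.uncurry P) {p : ℝ × ℝ | 0 < p.2})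
    (hRsmooth : ContDiffOn ℝ (⊤ : ℕ∞) (Function.uncurry R) {p : ℝ × ℝ | 0 < p.2})
    (hP : ∀ z r : ℝ, 0 < r → hatLap n P z r + lam / r ^ 2 * P z r = 0)
    (Q : ℝ → ℝ → ℝ) (hQ : ∀ z r : ℝ, 0 < r → Q z r = -(z / r) * P z r)
    (hR : ∀ z r : ℝ, 0 < r →
      lam * R z r = r * pdz P z r + r * pdr Q z r + (n : ℝ) * Q z r) :
    ∀ z r : ℝ, 0 < r →
      (hatLap n Q z r + (lam + n) / r ^ 2 * Q z r - 2 * lam / r ^ 2 * R z r = 0)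
      ∧ (hatLap n R z r + (lam + 2 - n) / r ^ 2 * R z r - 2 / r ^ 2 * Q z r = 0) := by
  have sP : ContDiffOn ℝ ∞ (Function.uncurry P) Uset := hPsmooth.of_le (by simp)
  have sP1 := smooth_pdz sP
  have sP2 := smooth_pdr sP
  have sP11 := smooth_pdz sP1
  have sP12 := smooth_pdr sP1
  have sP21 := smooth_pdz sP2
  have sP22 := smooth_pdr sP2
  -- first z-derivative of Q
  have hQ1 : ∀ z r : ℝ, 0 < r →
      pdz Q z r = -(1/r) * P z r - z/r * pdz P z r := by
    intro z r hr
    have hv := (((hasDerivAt_id' (x := z)).div_const r).fun_neg).fun_mul (hdz sP z hr)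
    rw [pdz_of_hasDerivAt hv (fun z' => by rw [hQ z' r hr])]
    ring
  -- first r-derivative of Q
  have hQ2 : ∀ z r : ℝ, 0 < r →
      pdr Q z r = z/r^2 * P z r - z/r * pdr P z r := by
    intro z r hr
    have hv := ((((hasDerivAt_inv hr.ne').const_mul z).fun_neg).fun_mul (hdr sP z hr))
    rw [pdr_of_hasDerivAt hr hv (fun r' hr' => by rw [hQ z r' hr']; ring)]
    field_simp
    ring
  -- formula for R
  have hRf : ∀ z r : ℝ, 0 < r →
      R z r = (r * pdz P z r - z * pdr P z r + (1 - (n:ℝ)) * (z/r) * P z r) / lam := by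
    intro z r hr
    rw [eq_div_iff hlam.ne', mul_comm (R z r) lam, hR z r hr, hQ2 z r hr, hQ z r hr]
    field_simp
    ring
  intro z r hr
  have hr2 : r ≠ 0 := hr.ne'
  -- second derivatives of Q
  have hQ11 : pdz (pdz Q) z r = -(2/r) * pdz P z r - z/r * pdz (pdz P) z r := by
    have hv := ((hdz sP z hr).const_mul (-(1/r))).fun_sub
      (((hasDerivAt_id' (x := z)).div_const r).fun_mul (hdz sP1 z hr))
    rw [pdz_of_hasDerivAt hv (fun z' => by rw [hQ1 z' r hr])]
    ring
  have hQ22 : pdr (pdr Q) z r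
      = -(2*z/r^3) * P z r + 2*z/r^2 * pdr P z r - z/r * pdr (pdr P) z r := by
    have hv := ((((hasDerivAt_pow 2 r).fun_inv (pow_ne_zero 2 hr2)).const_mul z).fun_mul
        (hdr sP z hr)).fun_sub (((hasDerivAt_inv hr2).const_mul z).fun_mul (hdr sP2 z hr))
    rw [pdr_of_hasDerivAt hr hv (fun r' hr' => by rw [hQ2 z r' hr']; ring)]
    field_simp
    ring
  -- PDE at the point
  have hPe := hP z r hr
  simp only [hatLap] at hPe
  have hp11 : pdz (pdz P) z r
      = lam/r^2 * P z r - (n:ℝ)/r * pdr P z r - pdr (pdr P) z r := by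
    linarith [hPe]
  -- first part
  have part1 : hatLap n Q z r + (lam + n) / r ^ 2 * Q z r - 2 * lam / r ^ 2 * R z r = 0 := by
    simp only [hatLap]
    rw [hQ11, hQ22, hQ2 z r hr, hQ z r hr, hRf z r hr, hp11]
    field_simp
    ring
  refine ⟨part1, ?_⟩
  -- derivatives of R
  have hR1 : ∀ z r : ℝ, 0 < r →
      pdz R z r = (r * pdz (pdz P) z r - pdr P z r - z * pdz (pdr P) z r
        + (1 - (n:ℝ)) * (z/r) * pdz P z r + (1 - (n:ℝ)) * (1/r) * P z r) / lam := by
    intro z r hr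
    have hv := ((((hdz sP1 z hr).const_mul r).fun_sub
        ((hasDerivAt_id' (x := z)).fun_mul (hdz sP2 z hr))).fun_add
        ((((hasDerivAt_id' (x := z)).div_const r).const_mul ((1:ℝ) - n)).fun_mul
          (hdz sP z hr))).div_const lam
    rw [pdz_of_hasDerivAt hv (fun z' => by rw [hRf z' r hr])]
    ring
  have hR2 : ∀ z r : ℝ, 0 < r →
      pdr R z r = (pdz P z r + r * pdr (pdz P) z r - z * pdr (pdr P) z r
        - (1 - (n:ℝ)) * (z/r^2) * P z r + (1 - (n:ℝ)) * (z/r) * pdr P z r) / lam := by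
    intro z r hr
    have hv := ((((hasDerivAt_id' (x := r)).fun_mul (hdr sP1 z hr)).fun_sub
        ((hdr sP2 z hr).const_mul z)).fun_add
        ((((hasDerivAt_inv hr.ne').const_mul z).const_mul ((1:ℝ) - n)).fun_mul
          (hdr sP z hr))).div_const lam
    rw [pdr_of_hasDerivAt hr hv (fun r' hr' => by rw [hRf z r' hr']; ring)]
    field_simp
    ring
  have hR11 : pdz (pdz R) z r
      = (r * pdz (pdz (pdz P)) z r - 2 * pdz (pdr P) z r - z * pdz (pdz (pdr P)) z r
        + 2 * (1 - (n:ℝ)) * (1/r) * pdz P z r + (1 - (n:ℝ)) * (z/r) * pdz (pdz P) z r) / lam := by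
    have hv := ((((((hdz sP11 z hr).const_mul r).fun_sub (hdz sP2 z hr)).fun_sub
        ((hasDerivAt_id' (x := z)).fun_mul (hdz sP21 z hr))).fun_add
        ((((hasDerivAt_id' (x := z)).div_const r).const_mul ((1:ℝ) - n)).fun_mul
          (hdz sP1 z hr))).fun_add
        ((hdz sP z hr).const_mul ((1 - (n:ℝ)) * (1/r)))).div_const lam
    rw [pdz_of_hasDerivAt hv (fun z' => by rw [hR1 z' r hr])]
    ring
  have hR22 : pdr (pdr R) z r
      = (2 * pdr (pdz P) z r + r * pdr (pdr (pdz P)) z r - z * pdr (pdr (pdr P)) z r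
        + (1 - (n:ℝ)) * (2*z/r^3) * P z r - 2 * (1 - (n:ℝ)) * (z/r^2) * pdr P z r
        + (1 - (n:ℝ)) * (z/r) * pdr (pdr P) z r) / lam := by
    have hv := (((((hdr sP1 z hr).fun_add
        ((hasDerivAt_id' (x := r)).fun_mul (hdr sP12 z hr))).fun_sub
        ((hdr sP22 z hr).const_mul z)).fun_sub
        (((((hasDerivAt_pow 2 r).fun_inv (pow_ne_zero 2 hr2)).const_mul z).const_mul
          ((1:ℝ) - n)).fun_mul (hdr sP z hr))).fun_add
        ((((hasDerivAt_inv hr2).const_mul z).const_mul ((1:ℝ) - n)).fun_mul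
          (hdr sP2 z hr))).div_const lam
    rw [pdr_of_hasDerivAt hr hv (fun r' hr' => by rw [hR2 z r' hr']; ring)]
    field_simp
    ring
  -- symmetry of second derivatives
  have hs1 : ∀ z r : ℝ, 0 < r → pdz (pdr P) z r = pdr (pdz P) z r :=
    fun z r hr => pd_comm sP hr
  have hs1p := hs1 z r hr
  have hs2 : pdz (pdr (pdr P)) z r = pdr (pdr (pdz P)) z r :=
    (pd_comm sP2 hr).trans (pdr_congr hr (fun r' hr' => hs1 z r' hr'))
  have hs3 : pdr (pdz (pdz P)) z r = pdz (pdz (pdr P)) z r :=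
    (pd_comm sP1 hr).symm.trans (pdz_congr (fun z' => (hs1 z' r hr).symm))
  -- z-derivative of the PDE
  have hEz' : pdz (pdz (pdz P)) z r
      = lam/r^2 * pdz P z r - (n:ℝ)/r * pdr (pdz P) z r - pdr (pdr (pdz P)) z r := by
    have hv := (((hdz sP11 z hr).fun_add (hdz sP22 z hr)).fun_add
        ((hdz sP2 z hr).const_mul ((n:ℝ)/r))).fun_sub ((hdz sP z hr).const_mul (lam/r^2))
    have h1 := pdz_of_hasDerivAt (f := fun z' _ => pdz (pdz P) z' r + pdr (pdr P) z' r
        + ((n:ℝ)/r) * pdr P z' r - lam/r^2 * P z' r) (r := r) hv (fun z' => rfl)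
    have h2 := pdz_of_hasDerivAt (f := fun z' _ => pdz (pdz P) z' r + pdr (pdr P) z' r
        + ((n:ℝ)/r) * pdr P z' r - lam/r^2 * P z' r) (r := r) (hasDerivAt_const z (0:ℝ))
        (fun z' => by
          have h := hP z' r hr
          simp only [hatLap] at h
          linear_combination -h)
    have h12 := h1.symm.trans h2
    rw [← hs2, ← hs1p]
    linear_combination h12
  -- r-derivative of the PDE
  have hEr' : pdz (pdz (pdr P)) z r
      = -pdr (pdr (pdr P)) z r - (n:ℝ)/r * pdr (pdr P) z r + (n:ℝ)/r^2 * pdr P z r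
        + lam/r^2 * pdr P z r - 2*lam/r^3 * P z r := by
    have hv := (((hdr sP11 z hr).fun_add (hdr sP22 z hr)).fun_add
        (((hasDerivAt_inv hr2).const_mul (n:ℝ)).fun_mul (hdr sP2 z hr))).fun_sub
        ((((hasDerivAt_inv hr2).fun_mul (hasDerivAt_inv hr2)).const_mul lam).fun_mul
          (hdr sP z hr))
    have h1 := pdr_of_hasDerivAt (f := fun _ r' => pdz (pdz P) z r' + pdr (pdr P) z r'
        + ((n:ℝ) * r'⁻¹) * pdr P z r' - (lam * (r'⁻¹ * r'⁻¹)) * P z r') (z := z) hr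
        hv (fun r' hr' => rfl)
    have h2 := pdr_of_hasDerivAt (f := fun _ r' => pdz (pdz P) z r' + pdr (pdr P) z r'
        + ((n:ℝ) * r'⁻¹) * pdr P z r' - (lam * (r'⁻¹ * r'⁻¹)) * P z r') (z := z) hr
        (hasDerivAt_const r (0:ℝ))
        (fun r' hr' => by
          have h := hP z r' hr'
          simp only [hatLap] at h
          linear_combination -h)
    have h12 := h1.symm.trans h2
    rw [← hs3]
    linear_combination h12
  -- final assembly for the second equation
  simp only [hatLap]
  rw [hR11, hR22, hR2 z r hr, hRf z r hr, hQ z r hr, hEz', hEr', hp11, hs1p]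
  field_simp
  ring
end

section
/- Let n ≥ 3 be an integer and let χ, ψ : (0,π) → ℝ be differentiable functions satisfying the coupled system χ′(θ) = −(n+1)·(cos θ / sin θ)·χ(θ) + (1/sin θ)·ψ(θ) and ψ′(θ) = −(n+1)·(cos θ / sin θ)·ψ(θ) + (1/sin θ)·χ(θ) for all θ ∈ (0,π). If ∫₀^π (χ(θ)² + ψ(θ)²)·sinⁿ(θ) dθ < ∞, then χ and ψ are both identically zero. -/
open Real MeasureTheory Set

/-!
The sum and difference of `χ` and `ψ` satisfy the decoupled equations
`u' = (-(n+1) cot θ ± csc θ) u`, and `θ ↦ π - θ` exchanges the two signs. The equation with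
the minus sign integrates to `v(θ) = c (1 + cos θ) / sinⁿ⁺² θ`, which behaves like `2c / θⁿ⁺²`
at `0`; hence `v² sinⁿ ≥ 4c² / θ⁴`, which is integrable on `(0, π)` only if `c = 0`.
-/

theorem mul_eq_of_hasDerivAt_neg_mul {a b : ℝ} {f g k : ℝ → ℝ}
    (hf : ∀ x ∈ Ioo a b, HasDerivAt f (-k x * f x) x)
    (hg : ∀ x ∈ Ioo a b, HasDerivAt g (k x * g x) x) {x y : ℝ}
    (hx : x ∈ Ioo a b) (hy : y ∈ Ioo a b) : f x * g x = f y * g y := by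
  have hfg : ∀ z ∈ Ioo a b, HasDerivAt (fun z => f z * g z) 0 z := fun z hz =>
    ((hf z hz).mul (hg z hz)).congr_deriv (by ring)
  exact isOpen_Ioo.is_const_of_deriv_eq_zero isPreconnected_Ioo
    (fun z hz => (hfg z hz).differentiableAt.differentiableWithinAt)
    (fun z hz => (hfg z hz).deriv) hx hy

theorem one_add_cos_pos_of_mem_Ioo {θ : ℝ} (hθ : θ ∈ Ioo 0 π) : 0 < 1 + cos θ := by
  have := sin_pos_of_pos_of_lt_pi hθ.1 hθ.2
  nlinarith [sin_sq_add_cos_sq θ]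

/-- On `(0, π)` this is `sinⁿ θ (1 - cos θ)`; the quotient form avoids the truncated exponent
`n - 1` when differentiating. -/
noncomputable def integratingFactor (n : ℕ) (θ : ℝ) : ℝ := sin θ ^ (n + 2) / (1 + cos θ)

theorem integratingFactor_pos (n : ℕ) {θ : ℝ} (hθ : θ ∈ Ioo 0 π) : 0 < integratingFactor n θ :=
  div_pos (pow_pos (sin_pos_of_pos_of_lt_pi hθ.1 hθ.2) _) (one_add_cos_pos_of_mem_Ioo hθ)

theorem hasDerivAt_integratingFactor (n : ℕ) {θ : ℝ} (hθ : θ ∈ Ioo 0 π) :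
    HasDerivAt (integratingFactor n)
      (((n + 1) * (cos θ / sin θ) + 1 / sin θ) * integratingFactor n θ) θ := by
  have hsin : sin θ ≠ 0 := (sin_pos_of_pos_of_lt_pi hθ.1 hθ.2).ne'
  have hcos : 1 + cos θ ≠ 0 := (one_add_cos_pos_of_mem_Ioo hθ).ne'
  have hnum := (hasDerivAt_sin θ).fun_pow (n + 2)
  have hden := (hasDerivAt_cos θ).const_add 1
  refine (hnum.div hden hcos).congr_deriv ?_
  rw [integratingFactor]
  field_simp
  push_cast
  linear_combination (sin θ ^ n * sin θ ^ 2) * (sin_sq_add_cos_sq θ)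

theorem four_mul_sq_mul_integratingFactor_div_le (n : ℕ) {θ : ℝ} (hθ : θ ∈ Ioo 0 π) (x : ℝ) :
    4 * (x * integratingFactor n θ) ^ 2 / θ ^ 4 ≤ x ^ 2 * sin θ ^ n := by
  have hsin := sin_pos_of_pos_of_lt_pi hθ.1 hθ.2
  have hcos := one_add_cos_pos_of_mem_Ioo hθ
  have hsin_pow : sin θ ^ n ≤ 1 := pow_le_one₀ hsin.le (sin_le_one θ)
  have hcos_le : 2 * (1 - cos θ) ≤ θ ^ 2 := by linarith [one_sub_sq_div_two_le_cos (x := θ)]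
  have hsq : integratingFactor n θ = sin θ ^ n * (1 - cos θ) := by
    rw [integratingFactor]
    field_simp
    linear_combination sin θ ^ n * sin_sq_add_cos_sq θ
  rw [hsq, div_le_iff₀ (by have := hθ.1; positivity)]
  have h1 : 0 ≤ 1 - cos θ := by linarith [cos_le_one θ]
  have h2 : (2 * (1 - cos θ)) ^ 2 ≤ (θ ^ 2) ^ 2 := pow_le_pow_left₀ (by positivity) hcos_le 2
  calc 4 * (x * (sin θ ^ n * (1 - cos θ))) ^ 2
      = x ^ 2 * sin θ ^ n * (sin θ ^ n * (2 * (1 - cos θ)) ^ 2) := by ring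
    _ ≤ x ^ 2 * sin θ ^ n * (1 * (θ ^ 2) ^ 2) := by gcongr
    _ = x ^ 2 * sin θ ^ n * θ ^ 4 := by ring

theorem eq_zero_of_integrableOn_div_pow_four {b c : ℝ} (hb : 0 < b)
    (h : IntegrableOn (fun x => c / x ^ 4) (Ioo 0 b)) : c = 0 := by
  by_contra hc
  have hpow : IntegrableOn (fun x : ℝ => x ^ (-4 : ℝ)) (Ioo 0 b) := by
    refine IntegrableOn.congr_fun (h.const_mul c⁻¹) (fun x hx => ?_) measurableSet_Ioo
    rw [rpow_neg hx.1.le, show (4 : ℝ) = (4 : ℕ) by norm_num, rpow_natCast]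
    field_simp
  rw [intervalIntegral.integrableOn_Ioo_rpow_iff hb] at hpow
  norm_num at hpow

theorem eq_zero_of_integrableOn_sq_mul_sin_pow (n : ℕ) {v : ℝ → ℝ}
    (hv : ∀ θ ∈ Ioo 0 π,
      HasDerivAt v (-((n : ℝ) + 1) * (cos θ / sin θ) * v θ - v θ / sin θ) θ)
    (hint : IntegrableOn (fun θ => v θ ^ 2 * sin θ ^ n) (Ioo 0 π)) :
    ∀ θ ∈ Ioo 0 π, v θ = 0 := by
  have hπ2 : π / 2 ∈ Ioo 0 π := ⟨by positivity, by linarith [pi_pos]⟩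
  set c := v (π / 2) * integratingFactor n (π / 2)
  have hconst : ∀ θ ∈ Ioo 0 π, v θ * integratingFactor n θ = c := fun θ hθ =>
    mul_eq_of_hasDerivAt_neg_mul (k := fun x => (n + 1) * (cos x / sin x) + 1 / sin x)
      (fun x hx => (hv x hx).congr_deriv (by ring))
      (fun x hx => hasDerivAt_integratingFactor n hx) hθ hπ2
  have hc : c = 0 := by
    suffices 4 * c ^ 2 = 0 by simpa using this
    refine eq_zero_of_integrableOn_div_pow_four pi_pos (hint.mono'
      (by fun_prop : Measurable fun x : ℝ => 4 * c ^ 2 / x ^ 4).aestronglyMeasurable ?_)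
    rw [ae_restrict_iff' measurableSet_Ioo]
    refine ae_of_all _ fun θ hθ => ?_
    rw [norm_of_nonneg (by positivity), ← hconst θ hθ]
    exact four_mul_sq_mul_integratingFactor_div_le n hθ (v θ)
  intro θ hθ
  simpa [(integratingFactor_pos n hθ).ne', hc] using hconst θ hθ

theorem hasDerivAt_comp_pi_sub (n : ℕ) {u : ℝ → ℝ}
    (hu : ∀ θ ∈ Ioo 0 π,
      HasDerivAt u (-((n : ℝ) + 1) * (cos θ / sin θ) * u θ + u θ / sin θ) θ) :
    ∀ θ ∈ Ioo 0 π, HasDerivAt (fun x => u (π - x))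
      (-((n : ℝ) + 1) * (cos θ / sin θ) * u (π - θ) - u (π - θ) / sin θ) θ := by
  intro θ hθ
  have hπθ : π - θ ∈ Ioo 0 π := ⟨by linarith [hθ.2], by linarith [hθ.1]⟩
  refine ((hu _ hπθ).comp θ ((hasDerivAt_id θ).const_sub π)).congr_deriv ?_
  rw [sin_pi_sub, cos_pi_sub]
  ring

theorem integrableOn_comp_sub_left_Ioo {E : Type*} [NormedAddCommGroup E] {f : ℝ → E} {a : ℝ}
    (h : IntegrableOn f (Ioo 0 a)) :
    IntegrableOn (fun x => f (a - x)) (Ioo 0 a) := by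
  have := ((Measure.measurePreserving_sub_left volume a).integrableOn_comp_preimage
    (measurableEmbedding_subLeft a)).2 h
  rwa [preimage_const_sub_Ioo, sub_self, sub_zero] at this

theorem integrableOn_sq_add_mul {s : Set ℝ} {f g w : ℝ → ℝ} (hs : MeasurableSet s)
    (hf : ContinuousOn f s) (hg : ContinuousOn g s) (hw : ContinuousOn w s)
    (hw0 : ∀ x ∈ s, 0 ≤ w x) (h : IntegrableOn (fun x => (f x ^ 2 + g x ^ 2) * w x) s) :
    IntegrableOn (fun x => (f x + g x) ^ 2 * w x) s := by
  refine (h.const_mul 2).mono' ((((hf.add hg).pow 2).mul hw).aestronglyMeasurable hs) ?_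
  rw [ae_restrict_iff' hs]
  refine ae_of_all _ fun x hx => ?_
  have := hw0 x hx
  rw [norm_of_nonneg (by positivity), ← mul_assoc]
  gcongr
  linarith [sq_nonneg (f x - g x)]

theorem coupled_system_trivial_general (n : ℕ) (χ ψ : ℝ → ℝ)
    (hχ : ∀ θ ∈ Set.Ioo (0 : ℝ) π, HasDerivAt χ
        (-((n : ℝ) + 1) * (cos θ / sin θ) * χ θ + ψ θ / sin θ) θ)
    (hψ : ∀ θ ∈ Set.Ioo (0 : ℝ) π, HasDerivAt ψ
        (-((n : ℝ) + 1) * (cos θ / sin θ) * ψ θ + χ θ / sin θ) θ)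
    (hint : IntegrableOn (fun θ => (χ θ ^ 2 + ψ θ ^ 2) * sin θ ^ n) (Set.Ioo 0 π)) :
    ∀ θ ∈ Set.Ioo (0 : ℝ) π, χ θ = 0 ∧ ψ θ = 0 := by
  have hχc : ContinuousOn χ (Ioo 0 π) := fun x hx => (hχ x hx).continuousAt.continuousWithinAt
  have hψc : ContinuousOn ψ (Ioo 0 π) := fun x hx => (hψ x hx).continuousAt.continuousWithinAt
  have hsin_pow : ∀ θ ∈ Ioo 0 π, 0 ≤ sin θ ^ n := fun θ hθ =>
    pow_nonneg (sin_nonneg_of_nonneg_of_le_pi hθ.1.le hθ.2.le) n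
  have hsum : ∀ θ ∈ Ioo 0 π, χ (π - θ) + ψ (π - θ) = 0 := by
    refine eq_zero_of_integrableOn_sq_mul_sin_pow n (v := fun θ => χ (π - θ) + ψ (π - θ))
      (hasDerivAt_comp_pi_sub n fun θ hθ =>
        ((hχ θ hθ).fun_add (hψ θ hθ)).congr_deriv (by ring)) ?_
    simpa only [sin_pi_sub] using integrableOn_comp_sub_left_Ioo
      (integrableOn_sq_add_mul measurableSet_Ioo hχc hψc (by fun_prop) hsin_pow hint)
  have hdiff : ∀ θ ∈ Ioo 0 π, χ θ - ψ θ = 0 := by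
    refine eq_zero_of_integrableOn_sq_mul_sin_pow n (v := fun θ => χ θ - ψ θ)
      (fun θ hθ => ((hχ θ hθ).fun_sub (hψ θ hθ)).congr_deriv (by ring)) ?_
    simpa [sub_eq_add_neg] using
      integrableOn_sq_add_mul (g := fun θ => -ψ θ) measurableSet_Ioo hχc hψc.neg (by fun_prop)
        hsin_pow (by simpa using hint)
  intro θ hθ
  have h₁ := hsum (π - θ) ⟨by linarith [hθ.2], by linarith [hθ.1]⟩
  have h₂ := hdiff θ hθ
  rw [sub_sub_cancel] at h₁
  constructor <;> linarith

/-- Any solution of the coupled ODE system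
`χ' = -(n+1)(cos/sin)χ + ψ/sin`, `ψ' = -(n+1)(cos/sin)ψ + χ/sin` on `(0,π)`
whose energy is integrable against `sinⁿ` vanishes identically. -/
theorem coupled_system_trivial (n : ℕ) (hn : 3 ≤ n) (χ ψ : ℝ → ℝ)
    (hχ : ∀ θ ∈ Set.Ioo (0 : ℝ) π, HasDerivAt χ
        (-((n : ℝ) + 1) * (cos θ / sin θ) * χ θ + ψ θ / sin θ) θ)
    (hψ : ∀ θ ∈ Set.Ioo (0 : ℝ) π, HasDerivAt ψ
        (-((n : ℝ) + 1) * (cos θ / sin θ) * ψ θ + χ θ / sin θ) θ)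
    (hint : IntegrableOn (fun θ => (χ θ ^ 2 + ψ θ ^ 2) * sin θ ^ n) (Set.Ioo 0 π)) :
    ∀ θ ∈ Set.Ioo (0 : ℝ) π, χ θ = 0 ∧ ψ θ = 0 :=
  coupled_system_trivial_general n χ ψ hχ hψ hint
end

section
/- Let n ≥ 1 be an integer and let χ, ψ : (0,π) → ℝ be differentiable functions satisfying the coupled system χ′(θ) = −(n+1)·(cos θ / sin θ)·χ(θ) + (1/sin θ)·ψ(θ) and ψ′(θ) = −(n+1)·(cos θ / sin θ)·ψ(θ) + (1/sin θ)·χ(θ) for all θ ∈ (0,π). If (χ,ψ) is not identically zero, then for every ε > 0 there exist δ ∈ (0,π) and C > 0 such that χ(θ)² + ψ(θ)² ≥ C·sin(θ)^{−2(n−1−ε)} for all θ ∈ (π−δ, π). -/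
/-!
Let `E = χ² + ψ²`. Since `4χψ ≥ -2E`, the system gives the differential inequality
`sin θ · E' ≥ -2(c cos θ + 1) E` with `c = n + 1`. Away from the endpoints `sin` is bounded below,
so `E · exp(K θ)` is nondecreasing for a suitable `K`; hence `E` never returns to zero once it is
positive. Near `π`, where `cos θ ≤ -1/(2+ε)`, the inequality makes `E · sin^(2(n-1-ε))`
nondecreasing, which is the claimed lower bound.
-/

open Real Set

lemma mul_le_mul_of_deriv_mul_nonneg {F w : ℝ → ℝ} {a b : ℝ} (hab : a ≤ b)
    (hF : ∀ t ∈ Icc a b, DifferentiableAt ℝ F t) (hw : ∀ t ∈ Icc a b, DifferentiableAt ℝ w t)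
    (h : ∀ t ∈ Ioo a b, 0 ≤ deriv F t * w t + F t * deriv w t) :
    F a * w a ≤ F b * w b := by
  have hFw : ∀ t ∈ Icc a b, DifferentiableAt ℝ (fun s => F s * w s) t :=
    fun t ht => (hF t ht).mul (hw t ht)
  refine monotoneOn_of_deriv_nonneg (convex_Icc a b)
    (fun t ht => (hFw t ht).continuousAt.continuousWithinAt)
    (fun t ht => (hFw t (interior_subset ht)).differentiableWithinAt) (fun t ht => ?_)
    (left_mem_Icc.mpr hab) (right_mem_Icc.mpr hab) hab
  rw [interior_Icc] at ht
  rw [deriv_fun_mul (hF t (Ioo_subset_Icc_self ht)) (hw t (Ioo_subset_Icc_self ht))]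
  exact h t ht

lemma min_sin_le_sin {a b t : ℝ} (ha : 0 ≤ a) (hb : b ≤ π) (ht : t ∈ Icc a b) :
    min (sin a) (sin b) ≤ sin t :=
  strictConcaveOn_sin_Icc.concaveOn.min_le_of_mem_Icc ⟨ha, (ht.1.trans ht.2).trans hb⟩
    ⟨ha.trans (ht.1.trans ht.2), hb⟩ ht

lemma mul_exp_le_mul_exp_of_deriv_add_mul_nonneg {F : ℝ → ℝ} {K a b : ℝ} (hab : a ≤ b)
    (hF : ∀ t ∈ Icc a b, DifferentiableAt ℝ F t)
    (h : ∀ t ∈ Ioo a b, 0 ≤ deriv F t + K * F t) :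
    F a * exp (K * a) ≤ F b * exp (K * b) := by
  have hexp (t : ℝ) : HasDerivAt (fun s => exp (K * s)) (exp (K * t) * K) t := by
    simpa using ((hasDerivAt_id' t).const_mul K).exp
  refine mul_le_mul_of_deriv_mul_nonneg hab hF (fun t _ => (hexp t).differentiableAt)
    fun t ht => ?_
  rw [(hexp t).deriv]
  nlinarith [exp_pos (K * t), h t ht]

lemma cos_lt_of_arccos_lt {x t : ℝ} (hx₁ : -1 ≤ x) (hx₂ : x ≤ 1) (ht : arccos x < t)
    (htπ : t ≤ π) : cos t < x :=
  cos_arccos hx₁ hx₂ ▸ cos_lt_cos_of_nonneg_of_le_pi (arccos_nonneg x) htπ ht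

def energy (χ ψ : ℝ → ℝ) (θ : ℝ) : ℝ := χ θ ^ 2 + ψ θ ^ 2

lemma energy_nonneg (χ ψ : ℝ → ℝ) (θ : ℝ) : 0 ≤ energy χ ψ θ := by
  unfold energy; positivity

def SolvesSystem (c : ℝ) (χ ψ : ℝ → ℝ) : Prop :=
  ∀ θ ∈ Ioo 0 π, HasDerivAt χ (-c * (cos θ / sin θ) * χ θ + ψ θ / sin θ) θ ∧
    HasDerivAt ψ (-c * (cos θ / sin θ) * ψ θ + χ θ / sin θ) θ

namespace SolvesSystem

variable {c : ℝ} {χ ψ : ℝ → ℝ}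

lemma hasDerivAt_energy (h : SolvesSystem c χ ψ) {θ : ℝ} (hθ : θ ∈ Ioo 0 π) :
    HasDerivAt (energy χ ψ)
      ((-2 * c * cos θ * energy χ ψ θ + 4 * (χ θ * ψ θ)) / sin θ) θ := by
  have hsin : sin θ ≠ 0 := (sin_pos_of_pos_of_lt_pi hθ.1 hθ.2).ne'
  refine (((h θ hθ).1.pow 2).add ((h θ hθ).2.pow 2)).congr_deriv ?_
  simp only [energy]
  field_simp
  ring

lemma differentiableAt_energy (h : SolvesSystem c χ ψ) {θ : ℝ} (hθ : θ ∈ Ioo 0 π) :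
    DifferentiableAt ℝ (energy χ ψ) θ :=
  (h.hasDerivAt_energy hθ).differentiableAt

lemma le_sin_mul_deriv_energy (h : SolvesSystem c χ ψ) {θ : ℝ} (hθ : θ ∈ Ioo 0 π) :
    -2 * (c * cos θ + 1) * energy χ ψ θ ≤ sin θ * deriv (energy χ ψ) θ := by
  rw [(h.hasDerivAt_energy hθ).deriv,
    mul_div_cancel₀ _ (sin_pos_of_pos_of_lt_pi hθ.1 hθ.2).ne']
  have : energy χ ψ θ = χ θ ^ 2 + ψ θ ^ 2 := rfl
  nlinarith [sq_nonneg (χ θ + ψ θ)]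

lemma energy_pos_of_le (h : SolvesSystem c χ ψ) {a b : ℝ} (ha : 0 < a) (hab : a ≤ b)
    (hb : b < π) (hpos : 0 < energy χ ψ a) : 0 < energy χ ψ b := by
  have hsub : Icc a b ⊆ Ioo 0 π := fun t ht => ⟨ha.trans_le ht.1, ht.2.trans_lt hb⟩
  set m := min (sin a) (sin b)
  have hm : 0 < m := lt_min (sin_pos_of_pos_of_lt_pi ha (hab.trans_lt hb))
    (sin_pos_of_pos_of_lt_pi (ha.trans_le hab) hb)
  have hmono := mul_exp_le_mul_exp_of_deriv_add_mul_nonneg (K := 2 * (|c| + 1) / m) hab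
    (fun t ht => h.differentiableAt_energy (hsub ht)) fun t ht => by
      have htπ := hsub (Ioo_subset_Icc_self ht)
      have hsin := sin_pos_of_pos_of_lt_pi htπ.1 htπ.2
      have hmsin : m ≤ sin t := min_sin_le_sin ha.le hb.le (Ioo_subset_Icc_self ht)
      have hE := energy_nonneg χ ψ t
      have hlow := h.le_sin_mul_deriv_energy htπ
      have hccos : c * cos t ≤ |c| := calc
        c * cos t ≤ |c * cos t| := le_abs_self _
        _ = |c| * |cos t| := abs_mul _ _
        _ ≤ |c| := mul_le_of_le_one_right (abs_nonneg c) (abs_cos_le_one t)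
      have hKE : 2 * (|c| + 1) * energy χ ψ t ≤ 2 * (|c| + 1) / m * energy χ ψ t * sin t := by
        rw [div_mul_eq_mul_div, div_mul_eq_mul_div, le_div_iff₀ hm]
        exact mul_le_mul_of_nonneg_left hmsin (by positivity)
      refine nonneg_of_mul_nonneg_right ?_ hsin
      nlinarith
  exact pos_of_mul_pos_left ((mul_pos hpos (exp_pos _)).trans_le hmono) (exp_pos _).le

lemma energy_mul_sin_rpow_le (h : SolvesSystem c χ ψ) {k a b : ℝ} (ha : 0 < a) (hab : a ≤ b)
    (hb : b < π) (hcos : ∀ t ∈ Ioo a b, 2 ≤ (k - 2 * c) * cos t) :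
    energy χ ψ a * sin a ^ k ≤ energy χ ψ b * sin b ^ k := by
  have hsub : Icc a b ⊆ Ioo 0 π := fun t ht => ⟨ha.trans_le ht.1, ht.2.trans_lt hb⟩
  have hsin : ∀ t ∈ Icc a b, 0 < sin t := fun t ht =>
    sin_pos_of_pos_of_lt_pi (hsub ht).1 (hsub ht).2
  have hpow : ∀ t ∈ Icc a b,
      HasDerivAt (fun s => sin s ^ k) (cos t * k * sin t ^ (k - 1)) t := fun t ht =>
    (hasDerivAt_sin t).rpow_const (Or.inl (hsin t ht).ne')
  refine mul_le_mul_of_deriv_mul_nonneg hab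
    (fun t ht => h.differentiableAt_energy (hsub ht))
    (fun t ht => (hpow t ht).differentiableAt) (fun t ht => ?_)
  have ht' := Ioo_subset_Icc_self ht
  have hst := hsin t ht'
  rw [(hpow t ht').deriv, rpow_sub hst, rpow_one]
  have hlow := h.le_sin_mul_deriv_energy (hsub ht')
  have hE := energy_nonneg χ ψ t
  have hk := hcos t ht
  have hweighted : 0 ≤ sin t * deriv (energy χ ψ) t + k * cos t * energy χ ψ t := by nlinarith
  have hfactor : deriv (energy χ ψ) t * sin t ^ k + energy χ ψ t * (cos t * k * (sin t ^ k / sin t))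
      = sin t ^ k / sin t * (sin t * deriv (energy χ ψ) t + k * cos t * energy χ ψ t) := by
    field_simp
  rw [hfactor]
  exact mul_nonneg (div_nonneg (rpow_nonneg hst.le k) hst.le) hweighted

end SolvesSystem

theorem energy_lower_bound_general (n : ℕ) (χ ψ : ℝ → ℝ)
    (hχ : ∀ θ ∈ Set.Ioo (0 : ℝ) π, HasDerivAt χ
        (-((n : ℝ) + 1) * (cos θ / sin θ) * χ θ + ψ θ / sin θ) θ)
    (hψ : ∀ θ ∈ Set.Ioo (0 : ℝ) π, HasDerivAt ψ
        (-((n : ℝ) + 1) * (cos θ / sin θ) * ψ θ + χ θ / sin θ) θ)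
    (hnontriv : ∃ θ ∈ Set.Ioo (0 : ℝ) π, χ θ ≠ 0 ∨ ψ θ ≠ 0) :
    ∀ ε : ℝ, 0 < ε → ∃ δ : ℝ, 0 < δ ∧ δ < π ∧ ∃ C : ℝ, 0 < C ∧
      ∀ θ ∈ Set.Ioo (π - δ) π,
        C * sin θ ^ (-(2 * ((n : ℝ) - 1 - ε))) ≤ χ θ ^ 2 + ψ θ ^ 2 := by
  intro ε hε
  have hsys : SolvesSystem ((n : ℝ) + 1) χ ψ := fun θ hθ => ⟨hχ θ hθ, hψ θ hθ⟩
  obtain ⟨θs, hθs, hnz⟩ := hnontriv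
  have hEs : 0 < energy χ ψ θs := by
    unfold energy
    rcases hnz with h | h <;> positivity
  have h2ε : 0 < 2 + ε := by linarith
  have hx₀ : -1 < -(2 + ε)⁻¹ := neg_lt_neg (inv_lt_one_of_one_lt₀ (by linarith))
  have hx₀' : -(2 + ε)⁻¹ ≤ 1 := (neg_nonpos.mpr (inv_nonneg.mpr h2ε.le)).trans zero_le_one
  set θ₀ := max θs (arccos (-(2 + ε)⁻¹))
  have hθ₀ : θ₀ ∈ Ioo 0 π := ⟨hθs.1.trans_le (le_max_left _ _),
    max_lt hθs.2 (arccos_lt_pi.mpr hx₀)⟩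
  have hE₀ : 0 < energy χ ψ θ₀ := hsys.energy_pos_of_le hθs.1 (le_max_left _ _) hθ₀.2 hEs
  set k := 2 * ((n : ℝ) - 1 - ε)
  refine ⟨π - θ₀, by linarith [hθ₀.2], by linarith [hθ₀.1], energy χ ψ θ₀ * sin θ₀ ^ k,
    mul_pos hE₀ (rpow_pos_of_pos (sin_pos_of_pos_of_lt_pi hθ₀.1 hθ₀.2) k), fun θ hθ => ?_⟩
  rw [sub_sub_cancel] at hθ
  have hmono := hsys.energy_mul_sin_rpow_le (k := k) hθ₀.1 hθ.1.le hθ.2 fun t ht => by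
    have hcos := mul_lt_mul_of_pos_left (cos_lt_of_arccos_lt hx₀.le hx₀'
      ((le_max_right _ _).trans_lt ht.1) (ht.2.trans hθ.2).le) h2ε
    rw [mul_neg, mul_inv_cancel₀ h2ε.ne'] at hcos
    linarith
  have hsθ : 0 < sin θ := sin_pos_of_pos_of_lt_pi (hθ₀.1.trans hθ.1) hθ.2
  rwa [rpow_neg hsθ.le, mul_inv_le_iff₀ (rpow_pos_of_pos hsθ k)]

/-- Energy lower bound near `θ = π` for nontrivial solutions of the coupled ODE system
`χ' = -(n+1)(cos/sin)χ + ψ/sin`, `ψ' = -(n+1)(cos/sin)ψ + χ/sin` on `(0,π)`: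
for every `ε > 0` there are `δ ∈ (0,π)` and `C > 0` with
`χ² + ψ² ≥ C·sin^{-2(n-1-ε)}` on `(π-δ, π)`. -/
theorem energy_lower_bound (n : ℕ) (hn : 1 ≤ n) (χ ψ : ℝ → ℝ)
    (hχ : ∀ θ ∈ Set.Ioo (0 : ℝ) π, HasDerivAt χ
        (-((n : ℝ) + 1) * (cos θ / sin θ) * χ θ + ψ θ / sin θ) θ)
    (hψ : ∀ θ ∈ Set.Ioo (0 : ℝ) π, HasDerivAt ψ
        (-((n : ℝ) + 1) * (cos θ / sin θ) * ψ θ + χ θ / sin θ) θ)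
    (hnontriv : ∃ θ ∈ Set.Ioo (0 : ℝ) π, χ θ ≠ 0 ∨ ψ θ ≠ 0) :
    ∀ ε : ℝ, 0 < ε → ∃ δ : ℝ, 0 < δ ∧ δ < π ∧ ∃ C : ℝ, 0 < C ∧
      ∀ θ ∈ Set.Ioo (π - δ) π,
        C * sin θ ^ (-(2 * ((n : ℝ) - 1 - ε))) ≤ χ θ ^ 2 + ψ θ ^ 2 :=
  energy_lower_bound_general n χ ψ hχ hψ hnontriv
end

section
/- Let n ≥ 2 be an integer, λ ≥ 0 a real number, and j ≥ 0 an integer. Then there exists a smooth, bounded function w : (0,π) → ℝ, not identically zero, such that −w″(θ) − n·(cos θ / sin θ)·w′(θ) + (λ / sin²θ)·w(θ) = η_{n+1}(ξₙ(λ) + j)·w(θ) for all θ ∈ (0,π). -/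
open Real

/-- `ξₙ(x) = -(n-1)/2 + √((n-1)²/4 + x)`. -/
noncomputable def xiFun (n : ℕ) (x : ℝ) : ℝ :=
  -(((n : ℝ) - 1) / 2) + Real.sqrt (((n : ℝ) - 1) ^ 2 / 4 + x)

/-- `ηₙ(y) = y(y + n - 1)`. -/
noncomputable def etaFun (n : ℕ) (y : ℝ) : ℝ := y * (y + (n : ℝ) - 1)

/-- Coefficients of the Gegenbauer-type polynomial of degree `j` with parameter `A`. -/
noncomputable def gegCoeff (A : ℝ) (j : ℕ) : ℕ → ℝ
  | 0 => if Even j then 1 else 0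
  | 1 => if Even j then 0 else 1
  | (k+2) => (((k:ℝ) - j) * ((k:ℝ) + j + A) / (((k:ℝ)+2)*((k:ℝ)+1))) * gegCoeff A j k

lemma gegCoeff_rec (A : ℝ) (j k : ℕ) :
    (((k:ℝ)+2)*((k:ℝ)+1)) * gegCoeff A j (k+2)
      = (((k:ℝ) - j) * ((k:ℝ) + j + A)) * gegCoeff A j k := by
  have h2 : (((k:ℝ)+2)*((k:ℝ)+1)) ≠ 0 := by positivity
  rw [gegCoeff]
  field_simp

lemma gegCoeff_parity (A : ℝ) (j : ℕ) : ∀ k, (¬ (Even j ↔ Even k)) → gegCoeff A j k = 0 := by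
  intro k
  induction k using Nat.twoStepInduction with
  | zero =>
      intro h
      have : ¬ Even j := by simpa using h
      simp [gegCoeff, this]
  | one =>
      intro h
      have : Even j := by
        by_contra hj
        exact h ⟨fun he => absurd he hj, fun h1 => absurd h1 (by decide)⟩
      simp [gegCoeff, this]
  | more k ih _ =>
      intro h
      rw [gegCoeff, ih (by simpa [Nat.even_add] using h)]
      ring

lemma gegCoeff_ne_zero (A : ℝ) (hA : 0 < A) (j : ℕ) :
    ∀ k, k ≤ j → (Even j ↔ Even k) → gegCoeff A j k ≠ 0 := by
  intro k
  induction k using Nat.twoStepInduction with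
  | zero => intro _ hp; simp [gegCoeff, hp.2 (by simp)]
  | one =>
      intro _ hp
      have : ¬ Even j := fun he => absurd (hp.mp he) (by decide)
      simp [gegCoeff, this]
  | more k ih _ =>
      intro hk hp
      rw [gegCoeff]
      have h1 : ((k:ℝ) - j) ≠ 0 := by
        have : k < j := by omega
        have : (k:ℝ) < j := by exact_mod_cast this
        linarith
      have h2 : ((k:ℝ) + j + A) ≠ 0 := by positivity
      have h3 := ih (by omega) (by simpa [Nat.even_add] using hp)
      have h4 : (((k:ℝ)+2)*((k:ℝ)+1)) ≠ 0 := by positivity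
      exact mul_ne_zero (div_ne_zero (mul_ne_zero h1 h2) h4) h3

lemma gegCoeff_of_gt (A : ℝ) (j : ℕ) : ∀ k, j < k → gegCoeff A j k = 0 := by
  intro k
  induction k using Nat.twoStepInduction with
  | zero => omega
  | one =>
      intro h
      have : j = 0 := by omega
      subst this
      simp [gegCoeff]
  | more k ih _ =>
      intro h
      rcases Nat.lt_or_ge j k with h' | h'
      · rw [gegCoeff, ih h']; ring
      · rcases Nat.eq_or_lt_of_le h' with h'' | h''
        · -- j = k
          rw [gegCoeff, ← h'']
          simp
        · -- j = k + 1
          have hj : j = k + 1 := by omega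
          subst hj
          apply gegCoeff_parity
          simp only [Nat.even_add_one]
          tauto

/-- The Gegenbauer-type polynomial. -/
noncomputable def gegPoly (A : ℝ) (j : ℕ) : Polynomial ℝ :=
  ∑ k ∈ Finset.range (j+1), Polynomial.C (gegCoeff A j k) * Polynomial.X ^ k

lemma gegPoly_coeff (A : ℝ) (j k : ℕ) : (gegPoly A j).coeff k = gegCoeff A j k := by
  classical
  rw [gegPoly, Polynomial.finset_sum_coeff]
  simp only [Polynomial.coeff_C_mul, Polynomial.coeff_X_pow, mul_ite, mul_one, mul_zero]
  rw [Finset.sum_ite_eq (Finset.range (j+1)) k (gegCoeff A j)]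
  by_cases hk : k ∈ Finset.range (j+1)
  · simp [hk]
  · simp only [hk, if_false]
    exact (gegCoeff_of_gt A j k (by simpa using hk)).symm

lemma gegPoly_ne_zero (A : ℝ) (hA : 0 < A) (j : ℕ) : gegPoly A j ≠ 0 := by
  intro h
  have := gegPoly_coeff A j j
  rw [h] at this
  exact gegCoeff_ne_zero A hA j j le_rfl Iff.rfl this.symm

lemma gegPoly_ode (A : ℝ) (j : ℕ) :
    (1 - Polynomial.X^2) * (Polynomial.derivative (Polynomial.derivative (gegPoly A j)))
      - Polynomial.C (A+1) * (Polynomial.X * Polynomial.derivative (gegPoly A j))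
      + Polynomial.C ((j:ℝ)*((j:ℝ)+A)) * gegPoly A j = 0 := by
  have hX2 : (1 - Polynomial.X^2) * (Polynomial.derivative (Polynomial.derivative (gegPoly A j)))
      = Polynomial.derivative (Polynomial.derivative (gegPoly A j))
        - Polynomial.derivative (Polynomial.derivative (gegPoly A j)) * Polynomial.X^2 := by ring
  have hX1 : Polynomial.X * Polynomial.derivative (gegPoly A j)
      = Polynomial.derivative (gegPoly A j) * Polynomial.X^1 := by ring
  rw [hX2, hX1]
  ext k
  simp only [Polynomial.coeff_add, Polynomial.coeff_sub, Polynomial.coeff_zero,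
    Polynomial.coeff_C_mul, Polynomial.coeff_mul_X_pow', Polynomial.coeff_derivative,
    gegPoly_coeff]
  rcases k with _ | _ | k
  · simp only [pow_one] at *
    norm_num
    linear_combination gegCoeff_rec A j 0
  · norm_num
    linear_combination gegCoeff_rec A j 1
  · norm_num [Nat.succ_sub_one]
    simp only [show k+1+1+1+1 = k+4 from by omega, show k+1+1 = k+2 from by omega]
    push_cast
    have hrec := gegCoeff_rec A j (k+2)
    simp only [show k+2+2 = k+4 from by omega] at hrec
    push_cast at hrec
    linear_combination hrec

lemma contDiff_polyEval (p : Polynomial ℝ) : ContDiff ℝ (⊤ : ℕ∞) (fun x : ℝ => p.eval x) := by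
  induction p using Polynomial.induction_on' with
  | add p q hp hq => simpa [Polynomial.eval_add] using hp.add hq
  | monomial n a => simpa [Polynomial.eval_monomial] using contDiff_const.mul (contDiff_id.pow n)

/-- Existence of a bounded smooth eigenfunction of the radial (separated)
Laplace–Beltrami operator on the sine-cone with eigenvalue `η_{n+1}(ξₙ(λ)+j)`. -/
theorem sine_cone_radial_eigenfunction (n : ℕ) (hn : 2 ≤ n) (lam : ℝ)
    (hlam : 0 ≤ lam) (j : ℕ) :
    ∃ w : ℝ → ℝ, ContDiffOn ℝ (⊤ : ℕ∞) w (Set.Ioo 0 π)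
      ∧ (∃ M : ℝ, ∀ θ ∈ Set.Ioo (0 : ℝ) π, |w θ| ≤ M)
      ∧ (∃ θ ∈ Set.Ioo (0 : ℝ) π, w θ ≠ 0)
      ∧ ∀ θ ∈ Set.Ioo (0 : ℝ) π,
          -deriv (deriv w) θ - (n : ℝ) * (cos θ / sin θ) * deriv w θ
              + lam / sin θ ^ 2 * w θ
            = etaFun (n + 1) (xiFun n lam + j) * w θ := by
  classical
  have hn2 : (2:ℝ) ≤ (n:ℝ) := by exact_mod_cast hn
  set ξ : ℝ := xiFun n lam with hξdef
  have hb : (0:ℝ) ≤ ((n:ℝ)-1)^2/4 + lam := by positivity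
  have hsq : Real.sqrt (((n:ℝ)-1)^2/4 + lam) ^ 2 = ((n:ℝ)-1)^2/4 + lam := Real.sq_sqrt hb
  have hξlam : ξ^2 + ((n:ℝ)-1)*ξ = lam := by
    rw [hξdef, xiFun]; nlinarith [hsq]
  have hξ0 : 0 ≤ ξ := by
    rw [hξdef, xiFun]
    nlinarith [Real.sqrt_nonneg (((n:ℝ)-1)^2/4 + lam), hsq]
  have hApos : 0 < 2*ξ + (n:ℝ) := by linarith
  set P : Polynomial ℝ := gegPoly (2*ξ + (n:ℝ)) j with hPdef
  set f : ℝ → ℝ := fun θ => Real.exp (ξ * Real.log (Real.sin θ)) with hfdef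
  set w : ℝ → ℝ := fun θ => f θ * P.eval (Real.cos θ) with hwdef
  -- derivative lemmas
  have hf' : ∀ x ∈ Set.Ioo (0:ℝ) π, HasDerivAt f (f x * (ξ * (cos x / sin x))) x := by
    intro x hx
    have hsx : 0 < sin x := Real.sin_pos_of_pos_of_lt_pi hx.1 hx.2
    have h1 : HasDerivAt (fun y => Real.log (Real.sin y)) (cos x / sin x) x := by
      have h := (Real.hasDerivAt_log hsx.ne').comp x (Real.hasDerivAt_sin x)
      rw [div_eq_inv_mul]; exact h
    exact (h1.const_mul ξ).exp
  have hg' : ∀ q : Polynomial ℝ, ∀ x : ℝ,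
      HasDerivAt (fun y => q.eval (Real.cos y)) ((Polynomial.derivative q).eval (cos x) * (-sin x)) x := by
    intro q x
    exact (q.hasDerivAt (cos x)).comp x (Real.hasDerivAt_cos x)
  set W1 : ℝ → ℝ := fun x => (f x * (ξ * (cos x / sin x))) * P.eval (cos x)
      + f x * ((Polynomial.derivative P).eval (cos x) * (-sin x)) with hW1def
  have hW1 : ∀ x ∈ Set.Ioo (0:ℝ) π, HasDerivAt w (W1 x) x := by
    intro x hx
    exact (hf' x hx).mul (hg' P x)
  have hW1' : ∀ x ∈ Set.Ioo (0:ℝ) π, HasDerivAt W1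
      (((f x * (ξ * (cos x / sin x))) * (ξ * (cos x / sin x))
          + f x * (ξ * ((-sin x * sin x - cos x * cos x) / sin x ^ 2))) * P.eval (cos x)
        + (f x * (ξ * (cos x / sin x))) * ((Polynomial.derivative P).eval (cos x) * (-sin x))
        + ((f x * (ξ * (cos x / sin x))) * ((Polynomial.derivative P).eval (cos x) * (-sin x))
          + f x * (((Polynomial.derivative (Polynomial.derivative P)).eval (cos x) * (-sin x)) * (-sin x)
                    + (Polynomial.derivative P).eval (cos x) * (-cos x)))) x := by
    intro x hx
    have hsx : 0 < sin x := Real.sin_pos_of_pos_of_lt_pi hx.1 hx.2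
    have hA1 : HasDerivAt (fun y => f y * (ξ * (cos y / sin y)))
        ((f x * (ξ * (cos x / sin x))) * (ξ * (cos x / sin x))
          + f x * (ξ * ((-sin x * sin x - cos x * cos x) / sin x ^ 2))) x := by
      exact (hf' x hx).mul (((Real.hasDerivAt_cos x).div (Real.hasDerivAt_sin x) hsx.ne').const_mul ξ)
    have hB1 : HasDerivAt (fun y => (Polynomial.derivative P).eval (cos y) * (-sin y))
        (((Polynomial.derivative (Polynomial.derivative P)).eval (cos x) * (-sin x)) * (-sin x)
          + (Polynomial.derivative P).eval (cos x) * (-cos x)) x := by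
      exact (hg' (Polynomial.derivative P) x).mul (Real.hasDerivAt_sin x).neg
    exact (hA1.mul (Polynomial.hasDerivAt P (cos x) |>.comp x (Real.hasDerivAt_cos x))).add
      ((hf' x hx).mul hB1)
  refine ⟨w, ?_, ?_, ?_, ?_⟩
  · -- smoothness
    apply ContDiffOn.mul
    · apply ContDiffOn.exp
      apply ContDiffOn.mul contDiffOn_const
      apply ContDiffOn.log Real.contDiff_sin.contDiffOn
      intro x hx
      exact (Real.sin_pos_of_pos_of_lt_pi hx.1 hx.2).ne'
    · exact ((contDiff_polyEval P).comp Real.contDiff_cos).contDiffOn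
  · -- boundedness
    obtain ⟨M, hM⟩ := (isCompact_Icc : IsCompact (Set.Icc (-1:ℝ) 1)).exists_bound_of_continuousOn
      (P.continuousOn)
    refine ⟨M, fun θ hθ => ?_⟩
    have hsθ : 0 < sin θ := Real.sin_pos_of_pos_of_lt_pi hθ.1 hθ.2
    have hf1 : |f θ| ≤ 1 := by
      rw [hfdef]
      simp only
      rw [abs_of_pos (Real.exp_pos _)]
      apply Real.exp_le_one_iff.mpr
      exact mul_nonpos_iff.mpr (Or.inl ⟨hξ0, Real.log_nonpos hsθ.le (Real.sin_le_one θ)⟩)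
    calc |w θ| = |f θ| * |P.eval (Real.cos θ)| := abs_mul _ _
      _ ≤ 1 * M := mul_le_mul hf1
            (by simpa using hM (cos θ) ⟨Real.neg_one_le_cos θ, Real.cos_le_one θ⟩)
            (abs_nonneg _) zero_le_one
      _ = M := one_mul M
  · -- not identically zero
    have hPne : P ≠ 0 := gegPoly_ne_zero _ hApos j
    have hfin : Set.Finite {x : ℝ | P.IsRoot x} := Polynomial.finite_setOf_isRoot hPne
    have hinf : Set.Infinite (Set.Ioo (-1:ℝ) 1) := Set.Ioo_infinite (by norm_num)
    obtain ⟨t, ht, hroot⟩ := Set.not_subset.mp (fun hsub => hinf (hfin.subset hsub))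
    refine ⟨Real.arccos t, ⟨(Real.arccos_pos).mpr ht.2, by rw [Real.arccos_eq_pi_div_two_sub_arcsin]; have := Real.neg_pi_div_two_lt_arcsin.mpr ht.1; linarith⟩, ?_⟩
    rw [hwdef]
    simp only
    rw [Real.cos_arccos ht.1.le ht.2.le]
    exact mul_ne_zero (Real.exp_ne_zero _) hroot
  · -- ODE
    intro θ hθ
    have hsθ : 0 < sin θ := Real.sin_pos_of_pos_of_lt_pi hθ.1 hθ.2
    have hdw : deriv w θ = W1 θ := (hW1 θ hθ).deriv
    have hev : deriv w =ᶠ[nhds θ] W1 :=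
      Filter.eventuallyEq_of_mem (isOpen_Ioo.mem_nhds hθ) (fun x hx => (hW1 x hx).deriv)
    have hd2 : deriv (deriv w) θ = _ := hev.deriv_eq.trans (hW1' θ hθ).deriv
    rw [hd2, hdw, hW1def]
    have hpyth : sin θ ^ 2 + cos θ ^ 2 = 1 := Real.sin_sq_add_cos_sq θ
    have hode := congrArg (Polynomial.eval (cos θ)) (gegPoly_ode (2*ξ + (n:ℝ)) j)
    simp only [Polynomial.eval_add, Polynomial.eval_sub, Polynomial.eval_mul, Polynomial.eval_one,
      Polynomial.eval_pow, Polynomial.eval_C, Polynomial.eval_X, Polynomial.eval_zero] at hode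
    have h3 : sin θ ^ 2 * (Polynomial.derivative (Polynomial.derivative P)).eval (cos θ)
        = (2*ξ + (n:ℝ) + 1) * cos θ * (Polynomial.derivative P).eval (cos θ)
          - (j:ℝ) * ((j:ℝ) + 2*ξ + (n:ℝ)) * P.eval (cos θ) := by
      rw [hPdef]
      linear_combination hode + (Polynomial.derivative (Polynomial.derivative (gegPoly (2*ξ + (n:ℝ)) j))).eval (cos θ) * hpyth
    rw [hwdef, etaFun]
    simp only
    push_cast
    field_simp
    linear_combination ((-(f θ)*(sin θ)^2)*h3
      + ((-(f θ)*(P.eval (cos θ))*(ξ^2+(n:ℝ)*ξ) + f θ * P.eval (cos θ) * ξ))*hpyth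
      + (-(f θ)*(P.eval (cos θ)))*hξlam)
end
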